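/- arXiv:2101.02198 — 2 statements merged into one kernel-verified Lean document; each statement's English description precedes it below -/
import Mathlib

section
/- (Variance of uniform client sampling) Suppose the learning rates satisfy η_t ≤ 2η_{t+E} for all t ≥ 0 and the stochastic gradients are uniformly bounded: E‖∇F_k(w,ξ)‖² ≤ H². Let t+1 be a communication step after E local SGD steps with learning rates at most η_t per step, let v̄_{t+1} = (1/N)Σ_{k=1}^N v_{t+1}^k be the average of all N clients' updated local models, and let ū_{t+1} = (1/K)Σ_{k∈S_t} v_{t+1}^k be the average over a subset S_t of K clients chosen uniformly at random without replacement from [N]. Then E[ū_{t+1}] = v̄_{t+1} and E‖v̄_{t+1} − ū_{t+1}‖² ≤ ((N−K)/(N−1)) · (4/K) · η_t² E² H². -/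
/-!
Given the local models, averaging over the `C(N, K)` equally likely client subsets is a purely
combinatorial computation. Each client lies in `C(N-1, K-1)` of them, which makes the sampled
average unbiased. For the centred models `x i = v̄ - v i` one has
`‖∑_{i∈s} x i‖² = -∑_{i∈s, j∉s} ⟪x i, x j⟫`, and each ordered pair `i ≠ j` is split this way
by `C(N-2, K-1)` subsets; this yields the finite-population variance
`(N-K)/((N-1)K) · (1/N)∑‖v i - v̄‖²`. The population variance is at most the mean squared
distance to the common start `w₀`, and `v k - w₀` is a sum of `E` SGD steps of size at most
`2η_t` each, so by Cauchy–Schwarz its second moment is at most `(2η_t E H)²`.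
-/

open MeasureTheory ProbabilityTheory Finset
open scoped ENNReal

instance finsetFinMeasurableSpace (N : ℕ) : MeasurableSpace (Finset (Fin N)) := ⊤

open scoped RealInnerProductSpace

theorem Nat.mul_mul_choose_sub_two (n k : ℕ) :
    n * (n - 1) * (n - 2).choose k = n.choose (k + 1) * (k + 1) * (n - (k + 1)) := by
  match n with
  | 0 => simp
  | 1 => simp
  | n + 2 =>
    calc (n + 2) * (n + 2 - 1) * (n + 2 - 2).choose k
          = (n + 1 + 1) * ((n + 1) * n.choose k) := by
            rw [Nat.add_sub_cancel, show n + 2 - 1 = n + 1 by omega, mul_assoc]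
      _ = (n + 1 + 1) * (n + 1).choose k * (n + 1 - k) := by
            rw [add_one_mul_choose_eq, choose_succ_right_eq, mul_assoc]
      _ = (n + 2).choose (k + 1) * (k + 1) * (n + 2 - (k + 1)) := by
            rw [add_one_mul_choose_eq, show n + 2 - (k + 1) = n + 1 - k by omega]

namespace Finset

section

variable {ι E : Type*} [NormedAddCommGroup E] [InnerProductSpace ℝ E]

theorem sum_norm_average_sub_sq_le (u : Finset ι) (x : ι → E) (c : E) :
    ∑ i ∈ u, ‖(#u : ℝ)⁻¹ • ∑ j ∈ u, x j - x i‖ ^ 2 ≤ ∑ i ∈ u, ‖x i - c‖ ^ 2 := by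
  set m := (#u : ℝ)⁻¹ • ∑ j ∈ u, x j
  have hcentered : ∑ i ∈ u, (x i - m) = 0 := by
    rcases u.eq_empty_or_nonempty with rfl | hu
    · simp
    rw [sum_sub_distrib, sum_const, ← Nat.cast_smul_eq_nsmul ℝ,
      smul_inv_smul₀ (by simp [hu.ne_empty]), sub_self]
  have hsplit : ∑ i ∈ u, ‖x i - c‖ ^ 2 = ∑ i ∈ u, ‖x i - m‖ ^ 2 + #u * ‖m - c‖ ^ 2 := by
    have h : ∀ i, x i - c = (x i - m) + (m - c) := fun i => by abel
    rw [sum_congr rfl fun i _ => by rw [h, norm_add_sq_real], sum_add_distrib, sum_add_distrib,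
      ← mul_sum, ← sum_inner, hcentered, inner_zero_left, mul_zero, add_zero, sum_const,
      nsmul_eq_mul]
  rw [hsplit]
  simp only [norm_sub_rev m]
  exact le_add_of_nonneg_right (by positivity)

end

variable {ι : Type*} [DecidableEq ι] {u : Finset ι} {K : ℕ}

theorem card_filter_mem_powersetCard {i : ι} (hi : i ∈ u) (hK : 0 < K) :
    #{s ∈ u.powersetCard K | i ∈ s} = (#u - 1).choose (K - 1) := by
  simpa using card_filter_powersetCard_subset {i} u K (singleton_subset_iff.2 hi) hK

theorem card_filter_mem_and_notMem_powersetCard {i j : ι} (hi : i ∈ u) (hj : j ∈ u)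
    (hij : i ≠ j) (hK : 0 < K) :
    #{s ∈ u.powersetCard K | i ∈ s ∧ j ∉ s} = (#u - 2).choose (K - 1) := by
  have h : {s ∈ u.powersetCard K | i ∈ s ∧ j ∉ s}
      = {s ∈ (u.erase j).powersetCard K | i ∈ s} := by
    ext s
    simp only [mem_filter, mem_powersetCard, subset_erase]
    tauto
  rw [h, card_filter_mem_powersetCard (mem_erase.2 ⟨hij, hi⟩) hK, card_erase_of_mem hj]
  rfl

theorem sum_powersetCard_sum {M : Type*} [AddCommMonoid M] (hK : 0 < K) (f : ι → M) :
    ∑ s ∈ u.powersetCard K, ∑ i ∈ s, f i = (#u - 1).choose (K - 1) • ∑ i ∈ u, f i := by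
  rw [sum_comm' (t' := u) (s' := fun i => {s ∈ u.powersetCard K | i ∈ s}), smul_sum]
  · exact sum_congr rfl fun i hi => by rw [sum_const, card_filter_mem_powersetCard hi hK]
  · intro s i
    simp only [mem_filter, mem_powersetCard]
    exact ⟨fun h => ⟨h, h.1.1 h.2⟩, fun h => h.1⟩

theorem inv_choose_smul_sum_powersetCard_average {E : Type*} [AddCommGroup E] [Module ℝ E]
    {N : ℕ} (hu : #u = N) (hK : 0 < K) (hKN : K ≤ N) (v : ι → E) :
    (N.choose K : ℝ)⁻¹ • ∑ s ∈ u.powersetCard K, (K : ℝ)⁻¹ • ∑ i ∈ s, v i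
      = (N : ℝ)⁻¹ • ∑ i ∈ u, v i := by
  rw [← smul_sum, sum_powersetCard_sum hK, hu, ← Nat.cast_smul_eq_nsmul ℝ, smul_smul, smul_smul]
  congr 1
  have h := Nat.add_one_mul_choose_eq (N - 1) (K - 1)
  rw [Nat.sub_add_cancel (hK.trans_le hKN), Nat.sub_add_cancel hK] at h
  have hC : (N.choose K : ℝ) ≠ 0 := Nat.cast_ne_zero.2 (Nat.choose_pos hKN).ne'
  have hN : (N : ℝ) ≠ 0 := Nat.cast_ne_zero.2 (by omega)
  have hK0 : (K : ℝ) ≠ 0 := Nat.cast_ne_zero.2 hK.ne'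
  have h' : (N : ℝ) * ((N - 1).choose (K - 1) : ℕ) = N.choose K * K := by exact_mod_cast h
  field_simp
  linear_combination h'

theorem sum_powersetCard_sum_sum_sdiff {M : Type*} [AddCommMonoid M] (T : ι → ι → M) :
    ∑ s ∈ u.powersetCard K, ∑ i ∈ s, ∑ j ∈ u \ s, T i j
      = ∑ i ∈ u, ∑ j ∈ u, #{s ∈ u.powersetCard K | i ∈ s ∧ j ∉ s} • T i j := by
  have h : ∀ s ∈ u.powersetCard K, ∑ i ∈ s, ∑ j ∈ u \ s, T i j
      = ∑ i ∈ u, ∑ j ∈ u, if i ∈ s ∧ j ∉ s then T i j else 0 := by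
    intro s hs
    simp only [ite_and, sum_ite_irrel, sum_const_zero, ← sum_filter, filter_mem_eq_inter,
      inter_eq_right.2 (mem_powersetCard.1 hs).1, sdiff_eq_filter]
  rw [sum_congr rfl h, sum_comm]
  refine sum_congr rfl fun i _ => ?_
  rw [sum_comm]
  exact sum_congr rfl fun j _ => by rw [← sum_filter, sum_const]

variable {E : Type*} [NormedAddCommGroup E] [InnerProductSpace ℝ E]

theorem norm_sum_sq_eq_neg_sum_sum_sdiff_inner {x : ι → E} (hx : ∑ i ∈ u, x i = 0)
    {s : Finset ι} (hs : s ⊆ u) :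
    ‖∑ i ∈ s, x i‖ ^ 2 = -∑ i ∈ s, ∑ j ∈ u \ s, ⟪x i, x j⟫ := by
  have hcompl : ∑ j ∈ u \ s, x j = -∑ i ∈ s, x i := by
    rw [eq_neg_iff_add_eq_zero, sum_sdiff hs, hx]
  rw [← real_inner_self_eq_norm_sq, sum_inner]
  simp only [← inner_sum, hcompl, inner_neg_right, sum_neg_distrib, neg_neg]

theorem sum_powersetCard_norm_sum_sq {x : ι → E} (hK : 0 < K) (hx : ∑ i ∈ u, x i = 0) :
    ∑ s ∈ u.powersetCard K, ‖∑ i ∈ s, x i‖ ^ 2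
      = ((#u - 2).choose (K - 1) : ℝ) * ∑ i ∈ u, ‖x i‖ ^ 2 := by
  set c := ((#u - 2).choose (K - 1) : ℝ)
  have hcount : ∀ i ∈ u, ∀ j ∈ u, #{s ∈ u.powersetCard K | i ∈ s ∧ j ∉ s} • ⟪x i, x j⟫
      = c * ⟪x i, x j⟫ - if i = j then c * ‖x i‖ ^ 2 else 0 := by
    intro i hi j hj
    by_cases hij : i = j
    · subst hij
      simp
    · rw [card_filter_mem_and_notMem_powersetCard hi hj hij hK, if_neg hij, sub_zero,
        nsmul_eq_mul]
  calc ∑ s ∈ u.powersetCard K, ‖∑ i ∈ s, x i‖ ^ 2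
      = -∑ s ∈ u.powersetCard K, ∑ i ∈ s, ∑ j ∈ u \ s, ⟪x i, x j⟫ := by
        rw [← sum_neg_distrib]
        exact sum_congr rfl fun s hs =>
          norm_sum_sq_eq_neg_sum_sum_sdiff_inner hx (mem_powersetCard.1 hs).1
    _ = -∑ i ∈ u, (c * ⟪x i, ∑ j ∈ u, x j⟫ - c * ‖x i‖ ^ 2) := by
        rw [sum_powersetCard_sum_sum_sdiff]
        congr 1
        refine sum_congr rfl fun i hi => ?_
        rw [sum_congr rfl (hcount i hi), sum_sub_distrib, ← mul_sum, ← inner_sum,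
          sum_ite_eq, if_pos hi]
    _ = c * ∑ i ∈ u, ‖x i‖ ^ 2 := by
        simp [hx, mul_sum]

theorem inv_choose_mul_sum_powersetCard_norm_average_sub_sq {N : ℕ} (hu : #u = N) (hK : 0 < K)
    (hKN : K ≤ N) (v : ι → E) :
    (N.choose K : ℝ)⁻¹ * ∑ s ∈ u.powersetCard K,
        ‖(N : ℝ)⁻¹ • ∑ i ∈ u, v i - (K : ℝ)⁻¹ • ∑ i ∈ s, v i‖ ^ 2
      = (N - K) / (N - 1) / K * ((N : ℝ)⁻¹ * ∑ i ∈ u, ‖(N : ℝ)⁻¹ • ∑ j ∈ u, v j - v i‖ ^ 2) := by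
  subst hu
  -- `K = #u` is split off because for `#u = 1` the right side divides by `#u - 1 = 0`.
  rcases hKN.eq_or_lt with rfl | hlt
  · simp [powersetCard_self]
  set x := fun i => (#u : ℝ)⁻¹ • ∑ j ∈ u, v j - v i
  have hx : ∑ i ∈ u, x i = 0 := by
    rw [sum_sub_distrib, sum_const, ← Nat.cast_smul_eq_nsmul ℝ,
      smul_inv_smul₀ (Nat.cast_ne_zero.2 (by omega)), sub_self]
  have hsample : ∀ s ∈ u.powersetCard K,
      (#u : ℝ)⁻¹ • ∑ i ∈ u, v i - (K : ℝ)⁻¹ • ∑ i ∈ s, v i = (K : ℝ)⁻¹ • ∑ i ∈ s, x i := by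
    intro s hs
    rw [sum_sub_distrib, sum_const, (mem_powersetCard.1 hs).2, smul_sub,
      ← Nat.cast_smul_eq_nsmul ℝ, inv_smul_smul₀ (Nat.cast_ne_zero.2 hK.ne')]
  have hchoose : (#u : ℝ) * ((#u : ℝ) - 1) * ((#u - 2).choose (K - 1) : ℕ)
      = (#u).choose K * K * ((#u : ℝ) - K) := by
    have h := Nat.mul_mul_choose_sub_two #u (K - 1)
    rw [Nat.sub_add_cancel hK] at h
    rw [← Nat.cast_sub hKN, ← Nat.cast_pred (by omega)]
    exact_mod_cast h
  rw [sum_congr rfl fun s hs => by rw [hsample s hs, norm_smul, mul_pow, norm_inv,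
    Real.norm_natCast], ← mul_sum, sum_powersetCard_norm_sum_sq hK hx]
  change _ = _ * (_ * ∑ i ∈ u, ‖x i‖ ^ 2)
  have hC : ((#u).choose K : ℝ) ≠ 0 := Nat.cast_ne_zero.2 (Nat.choose_pos hKN).ne'
  have hN : (#u : ℝ) ≠ 0 := Nat.cast_ne_zero.2 (by omega)
  have hN1 : (#u : ℝ) - 1 ≠ 0 := sub_ne_zero.2 (by norm_cast; omega)
  have hK0 : (K : ℝ) ≠ 0 := Nat.cast_ne_zero.2 hK.ne'
  field_simp
  linear_combination (∑ i ∈ u, ‖x i‖ ^ 2) * hchoose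

end Finset

section

variable {Ω Ω' α E : Type*} [MeasurableSpace Ω] [MeasurableSpace Ω'] [Fintype α]
  [MeasurableSpace α] [MeasurableSingletonClass α] [NormedAddCommGroup E] [NormedSpace ℝ E]
  [CompleteSpace E] {μ : Measure Ω} [IsFiniteMeasure μ] {S : Ω → α}

theorem integral_comp_eq_sum_measureReal_preimage_smul (hS : Measurable S) (φ : α → E) :
    ∫ ω, φ (S ω) ∂μ = ∑ a, μ.real (S ⁻¹' {a}) • φ a := by
  rw [← integral_map hS.aemeasurable AEStronglyMeasurable.of_discrete,
    integral_fintype Integrable.of_finite]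
  simp only [map_measureReal_apply hS (measurableSet_singleton _)]

theorem integral_prod_comp_fst_eq_integral_integral (hS : Measurable S) {ν : Measure Ω'}
    [SFinite ν] {f : α → Ω' → E} (hf : ∀ a, Integrable (f a) ν) :
    ∫ z, f (S z.1) z.2 ∂(μ.prod ν) = ∫ y, ∫ x, f (S x) y ∂μ ∂ν := by
  have hind : ∀ a, Integrable ((S ⁻¹' {a}).indicator (1 : Ω → ℝ)) μ := fun a =>
    (integrable_indicator_iff (hS (measurableSet_singleton a))).2 (integrable_const 1).integrableOn
  have hsplit : ∀ z : Ω × Ω',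
      f (S z.1) z.2 = ∑ a, (S ⁻¹' {a}).indicator (1 : Ω → ℝ) z.1 • f a z.2 := by
    intro z
    rw [sum_eq_single (S z.1) (fun a _ ha => by simp [Ne.symm ha]) (by simp)]
    simp
  calc ∫ z, f (S z.1) z.2 ∂(μ.prod ν)
      = ∑ a, ∫ z, (S ⁻¹' {a}).indicator (1 : Ω → ℝ) z.1 • f a z.2 ∂(μ.prod ν) := by
        simp only [hsplit]
        exact integral_finsetSum _ fun a _ => (hind a).smul_prod (hf a)
    _ = ∑ a, μ.real (S ⁻¹' {a}) • ∫ y, f a y ∂ν := by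
        simp only [integral_prod_smul, integral_indicator_one (hS (measurableSet_singleton _))]
    _ = ∫ y, ∑ a, μ.real (S ⁻¹' {a}) • f a y ∂ν := by
        rw [integral_finsetSum]
        · simp only [integral_smul]
        · exact fun a _ => (hf a).smul _
    _ = ∫ y, ∫ x, f (S x) y ∂μ ∂ν := by
        congr with y
        exact (integral_comp_eq_sum_measureReal_preimage_smul hS fun a => f a y).symm

end

theorem integral_comp_eq_inv_choose_smul_sum_powersetCard {Ω ι E : Type*} [MeasurableSpace Ω]
    [Fintype ι] [DecidableEq ι] [MeasurableSpace (Finset ι)]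
    [MeasurableSingletonClass (Finset ι)] [NormedAddCommGroup E] [NormedSpace ℝ E]
    [CompleteSpace E] {μ : Measure Ω} [IsFiniteMeasure μ] {S : Ω → Finset ι} {N K : ℕ}
    (hS : Measurable S) (hcard : ∀ ω, #(S ω) = K)
    (hunif : ∀ s : Finset ι, #s = K → μ {ω | S ω = s} = (N.choose K : ℝ≥0∞)⁻¹)
    (φ : Finset ι → E) :
    ∫ ω, φ (S ω) ∂μ = (N.choose K : ℝ)⁻¹ • ∑ s ∈ univ.powersetCard K, φ s := by
  rw [integral_comp_eq_sum_measureReal_preimage_smul hS, smul_sum]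
  have hnull : ∀ s ∉ univ.powersetCard K, μ.real (S ⁻¹' {s}) • φ s = 0 := by
    intro s hs
    have hempty : S ⁻¹' {s} = ∅ := by
      refine Set.eq_empty_of_forall_notMem fun ω hω => hs ?_
      rw [mem_powersetCard_univ, ← hω, hcard]
    rw [hempty, measureReal_empty, zero_smul]
  rw [← sum_subset (subset_univ _) fun s _ hs => hnull s hs]
  refine sum_congr rfl fun s hs => ?_
  change (μ {ω | S ω = s}).toReal • φ s = _
  rw [hunif s (mem_powersetCard_univ.1 hs), ENNReal.toReal_inv, ENNReal.toReal_natCast]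

theorem integral_prod_norm_average_sub_sampleAverage_sq_le {Ω Ω' ι E : Type*}
    [MeasurableSpace Ω] [MeasurableSpace Ω'] [Fintype ι] [DecidableEq ι]
    [MeasurableSpace (Finset ι)] [MeasurableSingletonClass (Finset ι)] [NormedAddCommGroup E]
    [InnerProductSpace ℝ E] [CompleteSpace E] {μ : Measure Ω} [IsFiniteMeasure μ]
    {ν : Measure Ω'} [SFinite ν] {S : Ω → Finset ι} {N K : ℕ} (hι : Fintype.card ι = N)
    (hK : 0 < K) (hKN : K ≤ N) (hS : Measurable S) (hcard : ∀ ω, #(S ω) = K)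
    (hunif : ∀ s : Finset ι, #s = K → μ {ω | S ω = s} = (N.choose K : ℝ≥0∞)⁻¹)
    {v : ι → Ω' → E} (hv : ∀ i, MemLp (v i) 2 ν) {c : Ω' → E} (hc : MemLp c 2 ν) {B : ℝ}
    (hB : ∀ i, ∫ y, ‖v i y - c y‖ ^ 2 ∂ν ≤ B) :
    ∫ z, ‖(N : ℝ)⁻¹ • ∑ i, v i z.2 - (K : ℝ)⁻¹ • ∑ i ∈ S z.1, v i z.2‖ ^ 2 ∂(μ.prod ν)
      ≤ (N - K) / (N - 1) / K * B := by
  have hu : #(univ : Finset ι) = N := by rw [card_univ, hι]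
  have hcoef : 0 ≤ ((N : ℝ) - K) / (N - 1) / K := by
    have : (K : ℝ) ≤ N := by exact_mod_cast hKN
    have : (1 : ℝ) ≤ K := by exact_mod_cast hK
    exact div_nonneg (div_nonneg (by linarith) (by linarith)) (by linarith)
  have hF : ∀ s : Finset ι, Integrable
      (fun y => ‖(N : ℝ)⁻¹ • ∑ i, v i y - (K : ℝ)⁻¹ • ∑ i ∈ s, v i y‖ ^ 2) ν := fun s =>
    (((memLp_finsetSum _ fun i _ => hv i).const_smul _).sub
      ((memLp_finsetSum _ fun i _ => hv i).const_smul _)).norm.integrable_sq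
  have hdev : ∀ i, Integrable (fun y => ‖v i y - c y‖ ^ 2) ν := fun i =>
    ((hv i).sub hc).norm.integrable_sq
  calc ∫ z, ‖(N : ℝ)⁻¹ • ∑ i, v i z.2 - (K : ℝ)⁻¹ • ∑ i ∈ S z.1, v i z.2‖ ^ 2 ∂(μ.prod ν)
      = ∫ y, ∫ x, ‖(N : ℝ)⁻¹ • ∑ i, v i y - (K : ℝ)⁻¹ • ∑ i ∈ S x, v i y‖ ^ 2 ∂μ ∂ν :=
        integral_prod_comp_fst_eq_integral_integral hS hF
    _ = ∫ y, (N - K) / (N - 1) / K *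
          ((N : ℝ)⁻¹ * ∑ i, ‖(N : ℝ)⁻¹ • ∑ j, v j y - v i y‖ ^ 2) ∂ν := by
        congr with y
        rw [← inv_choose_mul_sum_powersetCard_norm_average_sub_sq hu hK hKN, ← smul_eq_mul]
        exact integral_comp_eq_inv_choose_smul_sum_powersetCard hS hcard hunif
          fun s => ‖(N : ℝ)⁻¹ • ∑ i, v i y - (K : ℝ)⁻¹ • ∑ i ∈ s, v i y‖ ^ 2
    _ ≤ ∫ y, (N - K) / (N - 1) / K * ((N : ℝ)⁻¹ * ∑ i, ‖v i y - c y‖ ^ 2) ∂ν := by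
        refine integral_mono_of_nonneg (ae_of_all _ fun y => mul_nonneg hcoef (by positivity))
          ((integrable_finsetSum _ fun i _ => hdev i).const_mul _ |>.const_mul _)
          (ae_of_all _ fun y => ?_)
        have h := sum_norm_average_sub_sq_le univ (v · y) (c y)
        rw [hu] at h
        exact mul_le_mul_of_nonneg_left (mul_le_mul_of_nonneg_left h (by positivity)) hcoef
    _ = (N - K) / (N - 1) / K * ((N : ℝ)⁻¹ * ∑ i, ∫ y, ‖v i y - c y‖ ^ 2 ∂ν) := by
        rw [integral_const_mul, integral_const_mul, integral_finsetSum _ fun i _ => hdev i]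
    _ ≤ (N - K) / (N - 1) / K * ((N : ℝ)⁻¹ * ∑ _i : ι, B) := by
        gcongr with i
        exact hB i
    _ = (N - K) / (N - 1) / K * B := by
        rw [sum_const, hu, nsmul_eq_mul, inv_mul_cancel_left₀ (Nat.cast_ne_zero.2 (by omega))]

theorem Antitone.le_two_mul_of_mem_Icc {η : ℕ → ℝ} (hmono : Antitone η) {e t τ : ℕ}
    (h2 : ∀ τ, η τ ≤ 2 * η (τ + e)) (hte : e ≤ t + 1) (hτ : τ ∈ Icc (t + 1 - e) t) :
    η τ ≤ 2 * η t := by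
  have hstart := h2 (t + 1 - e)
  rw [Nat.sub_add_cancel hte] at hstart
  linarith [hmono (mem_Icc.1 hτ).1, hmono (Nat.le_succ t)]

theorem integral_norm_sum_smul_sq_le {Ω ι E : Type*} [MeasurableSpace Ω] [NormedAddCommGroup E]
    [NormedSpace ℝ E] {μ : Measure Ω} (I : Finset ι) {a : ι → ℝ} {G : ι → Ω → E} {A H : ℝ}
    (ha : ∀ τ ∈ I, |a τ| ≤ A) (hG : ∀ τ ∈ I, MemLp (G τ) 2 μ)
    (hGH : ∀ τ ∈ I, ∫ ω, ‖G τ ω‖ ^ 2 ∂μ ≤ H ^ 2) :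
    ∫ ω, ‖∑ τ ∈ I, a τ • G τ ω‖ ^ 2 ∂μ ≤ (#I * A) ^ 2 * H ^ 2 := by
  have hsq : ∀ τ ∈ I, Integrable (fun ω => ‖G τ ω‖ ^ 2) μ := fun τ hτ =>
    (hG τ hτ).norm.integrable_sq
  have hpoint : ∀ ω, ‖∑ τ ∈ I, a τ • G τ ω‖ ^ 2 ≤ #I * ∑ τ ∈ I, A ^ 2 * ‖G τ ω‖ ^ 2 := by
    intro ω
    calc ‖∑ τ ∈ I, a τ • G τ ω‖ ^ 2 ≤ (∑ τ ∈ I, ‖a τ • G τ ω‖) ^ 2 := by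
          gcongr
          exact norm_sum_le _ _
      _ ≤ #I * ∑ τ ∈ I, ‖a τ • G τ ω‖ ^ 2 := sq_sum_le_card_mul_sum_sq
      _ ≤ #I * ∑ τ ∈ I, A ^ 2 * ‖G τ ω‖ ^ 2 := by
          gcongr with τ hτ
          rw [norm_smul, mul_pow, Real.norm_eq_abs]
          gcongr
          exact ha τ hτ
  calc ∫ ω, ‖∑ τ ∈ I, a τ • G τ ω‖ ^ 2 ∂μ
      ≤ ∫ ω, #I * ∑ τ ∈ I, A ^ 2 * ‖G τ ω‖ ^ 2 ∂μ :=
        integral_mono_of_nonneg (ae_of_all _ fun ω => by positivity)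
          ((integrable_finsetSum _ fun τ hτ => (hsq τ hτ).const_mul _).const_mul _)
          (ae_of_all _ hpoint)
    _ = #I * ∑ τ ∈ I, A ^ 2 * ∫ ω, ‖G τ ω‖ ^ 2 ∂μ := by
        rw [integral_const_mul, integral_finsetSum _ fun τ hτ => (hsq τ hτ).const_mul _]
        simp only [integral_const_mul]
    _ ≤ #I * ∑ τ ∈ I, A ^ 2 * H ^ 2 := by
        gcongr with τ hτ
        exact hGH τ hτ
    _ = (#I * A) ^ 2 * H ^ 2 := by
        rw [sum_const, nsmul_eq_mul]
        ring

theorem variance_of_uniform_client_sampling_general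
    (d N K Epo : ℕ) (hK : 1 ≤ K) (hKN : K ≤ N)
    (H : ℝ) (t : ℕ) (htE : Epo ≤ t + 1)
    (eta : ℕ → ℝ) (hmono : Antitone eta) (hpos : ∀ τ, 0 ≤ eta τ)
    (h2eta : ∀ τ, eta τ ≤ 2 * eta (τ + Epo))
    (Ωs Ωg : Type) [MeasurableSpace Ωs] [MeasurableSpace Ωg]
    (Ps : Measure Ωs) (Pg : Measure Ωg)
    [IsProbabilityMeasure Ps] [IsProbabilityMeasure Pg]
    (w0 : Ωg → EuclideanSpace ℝ (Fin d))
    (g : Fin N → ℕ → Ωg → EuclideanSpace ℝ (Fin d))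
    (v : Fin N → Ωg → EuclideanSpace ℝ (Fin d))
    (hv : ∀ k, v k = fun ωg =>
      w0 ωg - ∑ τ ∈ Finset.Icc (t + 1 - Epo) t, eta τ • g k τ ωg)
    (hbd : ∀ k τ, ∫ ωg, ‖g k τ ωg‖ ^ 2 ∂Pg ≤ H ^ 2)
    (hmemg : ∀ k τ, MemLp (g k τ) 2 Pg) (hmem0 : MemLp w0 2 Pg)
    (S : Ωs → Finset (Fin N)) (hSmeas : Measurable S)
    (hcard : ∀ ωs, (S ωs).card = K)
    (hunif : ∀ s : Finset (Fin N), s.card = K →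
      Ps {ωs | S ωs = s} = ((N.choose K : ℝ≥0∞))⁻¹) :
    (∀ ωg, ∫ ωs, (K : ℝ)⁻¹ • ∑ k ∈ S ωs, v k ωg ∂Ps = (N : ℝ)⁻¹ • ∑ k, v k ωg) ∧
      ∫ ω, ‖(N : ℝ)⁻¹ • ∑ k, v k ω.2 - (K : ℝ)⁻¹ • ∑ k ∈ S ω.1, v k ω.2‖ ^ 2
          ∂(Ps.prod Pg)
        ≤ ((N : ℝ) - K) / ((N : ℝ) - 1) * (4 / K) * (eta t) ^ 2 * (Epo : ℝ) ^ 2 * H ^ 2 := by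
  refine ⟨fun ωg => ?_, ?_⟩
  · rw [← inv_choose_smul_sum_powersetCard_average (card_fin N) hK hKN]
    exact integral_comp_eq_inv_choose_smul_sum_powersetCard hSmeas hcard hunif
      fun s => (K : ℝ)⁻¹ • ∑ k ∈ s, v k ωg
  set I := Icc (t + 1 - Epo) t
  have hmemv : ∀ k, MemLp (v k) 2 Pg := fun k =>
    hv k ▸ hmem0.sub (memLp_finsetSum I fun τ _ => (hmemg k τ).const_smul (eta τ))
  have hdrift : ∀ k, ∫ ωg, ‖v k ωg - w0 ωg‖ ^ 2 ∂Pg ≤ (Epo * (2 * eta t)) ^ 2 * H ^ 2 := by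
    intro k
    have hI : #I = Epo := by simp only [I, Nat.card_Icc]; omega
    simp only [hv k, sub_sub_cancel_left, norm_neg, ← hI]
    refine integral_norm_sum_smul_sq_le I (fun τ hτ => ?_) (fun τ _ => hmemg k τ)
      fun τ _ => hbd k τ
    rw [abs_of_nonneg (hpos τ)]
    exact hmono.le_two_mul_of_mem_Icc h2eta htE hτ
  calc _ ≤ (N - K) / (N - 1) / K * ((Epo * (2 * eta t)) ^ 2 * H ^ 2) :=
        integral_prod_norm_average_sub_sampleAverage_sq_le (Fintype.card_fin N) hK hKN hSmeas
          hcard hunif hmemv hmem0 hdrift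
    _ = _ := by ring

/-- **Variance of uniform client sampling.**
Each of the `N` clients starts round `t` from a common (random) point `w₀` and performs
`E` local SGD steps `v ← v − η_τ g_τ` with nonnegative, non-increasing learning rates
satisfying `η_τ ≤ 2 η_{τ+E}`, where the stochastic gradients satisfy `E‖g‖² ≤ H²`;
`v_{t+1}^k` is client `k`'s model after the `E` steps ending at step `t+1`.  The subset
`S` of `K` clients is drawn uniformly at random without replacement, independently of the
SGD sampling (modeled by the product space `Ωs × Ωg`).  Then the sampled average
`ū_{t+1} = (1/K)∑_{k∈S} v_{t+1}^k` satisfies `E[ū_{t+1}] = v̄_{t+1}` (expectation over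
the sampling) and `E‖v̄_{t+1} − ū_{t+1}‖² ≤ ((N−K)/(N−1)) (4/K) η_t² E² H²`. -/
theorem variance_of_uniform_client_sampling
    (d N K Epo : ℕ) (hN : 0 < N) (hK : 1 ≤ K) (hKN : K ≤ N) (hEpo : 1 ≤ Epo)
    (H : ℝ) (t : ℕ) (htE : Epo ≤ t + 1)
    (eta : ℕ → ℝ) (hmono : Antitone eta) (hpos : ∀ τ, 0 ≤ eta τ)
    (h2eta : ∀ τ, eta τ ≤ 2 * eta (τ + Epo))
    (Ωs Ωg : Type) [MeasurableSpace Ωs] [MeasurableSpace Ωg]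
    (Ps : Measure Ωs) (Pg : Measure Ωg)
    [IsProbabilityMeasure Ps] [IsProbabilityMeasure Pg]
    (w0 : Ωg → EuclideanSpace ℝ (Fin d))
    (g : Fin N → ℕ → Ωg → EuclideanSpace ℝ (Fin d))
    (v : Fin N → Ωg → EuclideanSpace ℝ (Fin d))
    (hv : ∀ k, v k = fun ωg =>
      w0 ωg - ∑ τ ∈ Finset.Icc (t + 1 - Epo) t, eta τ • g k τ ωg)
    (hbd : ∀ k τ, ∫ ωg, ‖g k τ ωg‖ ^ 2 ∂Pg ≤ H ^ 2)
    (hmemg : ∀ k τ, MemLp (g k τ) 2 Pg) (hmem0 : MemLp w0 2 Pg)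
    (S : Ωs → Finset (Fin N)) (hSmeas : Measurable S)
    (hcard : ∀ ωs, (S ωs).card = K)
    (hunif : ∀ s : Finset (Fin N), s.card = K →
      Ps {ωs | S ωs = s} = ((N.choose K : ℝ≥0∞))⁻¹) :
    (∀ ωg, ∫ ωs, (K : ℝ)⁻¹ • ∑ k ∈ S ωs, v k ωg ∂Ps = (N : ℝ)⁻¹ • ∑ k, v k ωg) ∧
      ∫ ω, ‖(N : ℝ)⁻¹ • ∑ k, v k ω.2 - (K : ℝ)⁻¹ • ∑ k ∈ S ω.1, v k ω.2‖ ^ 2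
          ∂(Ps.prod Pg)
        ≤ ((N : ℝ) - K) / ((N : ℝ) - 1) * (4 / K) * (eta t) ^ 2 * (Epo : ℝ) ^ 2 * H ^ 2 :=
  variance_of_uniform_client_sampling_general d N K Epo hK hKN H t htE eta hmono hpos h2eta Ωs Ωg Ps
    Pg w0 g v hv hbd hmemg hmem0 S hSmeas hcard hunif
end

section
/- (One-round recursion with uplink noise) Under the stated smoothness, strong convexity, unbiasedness, bounded-variance and bounded-gradient assumptions, with non-increasing learning rates satisfying η_t ≤ 2η_{t+E} and η_t ≤ 1/(4L): if step t+1 is a communication step with full participation, so that p̄_{t+1} = v̄_{t+1} + (1/N)Σ_{k=1}^N n_{t+1}^k where the uplink noise satisfies E[n_{t+1}^k] = 0, E‖(1/N)Σ_k n_{t+1}^k‖² = dσ²_{t+1}/N² (σ²_{t+1} = Σ_k σ²_{t+1,k}), and is independent of v̄_{t+1}, then E‖p̄_{t+1} − w*‖² ≤ (1 − η_t μ)·E‖p̄_t − w*‖² + dσ²_{t+1}/N² + η_t²·( Σ_{k=1}^N δ_k²/N² + 6LΓ + 8(E−1)²H² ). -/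
open MeasureTheory ProbabilityTheory Finset
open scoped RealInnerProductSpace

/-!
Write `p̄_{t+1} − w* = (p̄_t − w* − η_t ∇F(p̄_t)) − η_t ξ + ν`, where `∇F` is the average of
the client gradients, `ξ` the averaged gradient noise and `ν` the averaged uplink noise. The three
terms are orthogonal in `L²`: `ν` is centred and independent of `v̄_{t+1}`, and `ξ` has zero
conditional mean given a σ-algebra for which `p̄_t` is measurable. So the mean square splits into
three parts. The exact gradient step contracts by `1 − η_t μ` up to `2 L η_t² Γ` (strong convexity
together with `‖∇F_k‖² ≤ 2L (F_k − F_k*)`, using only `η_t L ≤ 1`), the gradient noise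
contributes `η_t² ∑ δ_k² / N²` because it is uncorrelated across clients, and the uplink noise
contributes `d σ² / N²`.
-/

section GradientStep

variable {E : Type*} [NormedAddCommGroup E] [InnerProductSpace ℝ E]

theorem sq_norm_grad_le_of_smooth {F : E → ℝ} {g : E → E} {L Fstar : ℝ} (hL : 0 < L)
    (hsmooth : ∀ v w, F v ≤ F w + ⟪v - w, g w⟫ + L / 2 * ‖v - w‖ ^ 2)
    (hFstar : ∀ v, Fstar ≤ F v) (p : E) :
    ‖g p‖ ^ 2 ≤ 2 * L * (F p - Fstar) := by
  have hdescent := hsmooth (p - L⁻¹ • g p) p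
  rw [sub_sub_cancel_left, inner_neg_left, real_inner_smul_left, real_inner_self_eq_norm_sq,
    norm_neg, norm_smul, mul_pow, Real.norm_eq_abs, sq_abs] at hdescent
  have hcoef : L / 2 * (L⁻¹ ^ 2 * ‖g p‖ ^ 2) = L⁻¹ * ‖g p‖ ^ 2 - ‖g p‖ ^ 2 / (2 * L) := by
    field_simp; ring
  have : ‖g p‖ ^ 2 / (2 * L) ≤ F p - Fstar := by linarith [hFstar (p - L⁻¹ • g p)]
  rwa [div_le_iff₀ (by positivity), mul_comm] at this

theorem sq_norm_inv_card_smul_sum_le {ι : Type*} [Fintype ι] (x : ι → E) :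
    ‖(Fintype.card ι : ℝ)⁻¹ • ∑ i, x i‖ ^ 2 ≤ (Fintype.card ι : ℝ)⁻¹ * ∑ i, ‖x i‖ ^ 2 := by
  rcases isEmpty_or_nonempty ι with _ | _
  · simp
  have hcard : (0 : ℝ) < Fintype.card ι := by exact_mod_cast Fintype.card_pos
  calc ‖(Fintype.card ι : ℝ)⁻¹ • ∑ i, x i‖ ^ 2
      ≤ ((Fintype.card ι : ℝ)⁻¹ * ∑ i, ‖x i‖) ^ 2 := by
        rw [norm_smul, norm_inv, RCLike.norm_natCast]
        gcongr
        exact norm_sum_le _ _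
    _ ≤ (Fintype.card ι : ℝ)⁻¹ ^ 2 * (Fintype.card ι * ∑ i, ‖x i‖ ^ 2) := by
        rw [mul_pow]
        gcongr
        simpa using sq_sum_le_card_mul_sum_sq (s := univ) (f := fun i => ‖x i‖)
    _ = (Fintype.card ι : ℝ)⁻¹ * ∑ i, ‖x i‖ ^ 2 := by
        field_simp

theorem inv_natCast_smul_sum_sub_smul {N : ℕ} (hN : N ≠ 0) (x : E) (y : Fin N → E) (η : ℝ) :
    (N : ℝ)⁻¹ • ∑ k, (x - η • y k) = x - (η / N) • ∑ k, y k := by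
  rw [sum_sub_distrib, sum_const, card_univ, Fintype.card_fin, ← smul_sum, smul_sub,
    ← Nat.cast_smul_eq_nsmul ℝ, smul_smul, smul_smul, inv_mul_cancel₀ (by exact_mod_cast hN),
    one_smul, div_eq_inv_mul]

theorem sq_norm_sub_smul_sum_grad_le {ι : Type*} [Fintype ι] [Nonempty ι]
    {F : ι → E → ℝ} {g : ι → E → E} {Fstar : ι → ℝ} {w : E} {L μ η : ℝ} (hL : 0 < L)
    (hsmooth : ∀ i v u, F i v ≤ F i u + ⟪v - u, g i u⟫ + L / 2 * ‖v - u‖ ^ 2)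
    (hconvex : ∀ i v u, F i v ≥ F i u + ⟪v - u, g i u⟫ + μ / 2 * ‖v - u‖ ^ 2)
    (hw : ∀ v, (Fintype.card ι : ℝ)⁻¹ * ∑ i, F i w ≤ (Fintype.card ι : ℝ)⁻¹ * ∑ i, F i v)
    (hFstar : ∀ i v, Fstar i ≤ F i v) (hη : 0 ≤ η) (hηL : η * L ≤ 1) (p : E) :
    ‖p - w - (η / Fintype.card ι) • ∑ i, g i p‖ ^ 2
      ≤ (1 - η * μ) * ‖p - w‖ ^ 2 + 2 * L * η ^ 2
        * ((Fintype.card ι : ℝ)⁻¹ * ∑ i, F i w - (Fintype.card ι : ℝ)⁻¹ * ∑ i, Fstar i) := by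
  set c : ℝ := (Fintype.card ι : ℝ)⁻¹
  have hc : c * Fintype.card ι = 1 := inv_mul_cancel₀ (by positivity)
  have hinner : c * ∑ i, F i p - c * ∑ i, F i w + μ / 2 * ‖p - w‖ ^ 2
      ≤ ⟪p - w, c • ∑ i, g i p⟫ := by
    have hi (i : ι) : F i p - F i w + μ / 2 * ‖p - w‖ ^ 2 ≤ ⟪p - w, g i p⟫ := by
      have := hconvex i w p
      rw [← neg_sub p w, inner_neg_left, norm_neg] at this
      linarith
    have := mul_le_mul_of_nonneg_left (sum_le_sum (s := univ) fun i _ => hi i)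
      (by positivity : 0 ≤ c)
    rw [sum_add_distrib, sum_sub_distrib, sum_const, card_univ, nsmul_eq_mul, mul_add,
      ← mul_assoc, hc, one_mul, mul_sub] at this
    rwa [real_inner_smul_right, inner_sum]
  have hgrad : ‖c • ∑ i, g i p‖ ^ 2 ≤ 2 * L * (c * ∑ i, F i p - c * ∑ i, Fstar i) :=
    calc ‖c • ∑ i, g i p‖ ^ 2 ≤ c * ∑ i, ‖g i p‖ ^ 2 := sq_norm_inv_card_smul_sum_le _
      _ ≤ c * ∑ i, 2 * L * (F i p - Fstar i) := by
        gcongr with i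
        exact sq_norm_grad_le_of_smooth hL (hsmooth i) (hFstar i) p
      _ = 2 * L * (c * ∑ i, F i p - c * ∑ i, Fstar i) := by
        rw [← mul_sum, sum_sub_distrib]; ring
  have hgap : 0 ≤ c * ∑ i, F i p - c * ∑ i, F i w := sub_nonneg.2 (hw p)
  rw [div_eq_mul_inv, ← smul_smul, norm_sub_sq_real, real_inner_smul_right, norm_smul, mul_pow,
    Real.norm_eq_abs, sq_abs]
  -- the optimality gap enters with the coefficient `-2η (1 - η L) ≤ 0`
  linarith [mul_le_mul_of_nonneg_left hinner hη, mul_le_mul_of_nonneg_left hgrad (sq_nonneg η),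
    mul_nonneg (mul_nonneg hη hgap) (sub_nonneg.2 hηL)]

end GradientStep

section MeanSquare

variable {Ω E : Type*} {m mΩ : MeasurableSpace Ω} {P : Measure Ω}
  [NormedAddCommGroup E] [InnerProductSpace ℝ E]

theorem MeasureTheory.MemLp.integrable_inner {X Y : Ω → E} (hX : MemLp X 2 P)
    (hY : MemLp Y 2 P) : Integrable (fun ω => ⟪X ω, Y ω⟫) P :=
  (L2.integrable_inner (𝕜 := ℝ) (hX.toLp X) (hY.toLp Y)).congr <| by
    filter_upwards [hX.coeFn_toLp, hY.coeFn_toLp] with ω hXω hYω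
    rw [hXω, hYω]

theorem integral_sq_norm_add_of_integral_inner_eq_zero {X Y : Ω → E} (hX : MemLp X 2 P)
    (hY : MemLp Y 2 P) (h : ∫ ω, ⟪X ω, Y ω⟫ ∂P = 0) :
    ∫ ω, ‖X ω + Y ω‖ ^ 2 ∂P = ∫ ω, ‖X ω‖ ^ 2 ∂P + ∫ ω, ‖Y ω‖ ^ 2 ∂P := by
  have hX2 := (memLp_two_iff_integrable_sq_norm hX.1).1 hX
  have hY2 := (memLp_two_iff_integrable_sq_norm hY.1).1 hY
  have hXY := (hX.integrable_inner hY).const_mul 2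
  simp_rw [norm_add_sq_real]
  rw [integral_add (by exact hX2.add hXY) hY2, integral_add hX2 hXY, integral_const_mul, h,
    mul_zero, add_zero]

theorem integral_sq_norm_sub_of_integral_inner_eq_zero {X Y : Ω → E} (hX : MemLp X 2 P)
    (hY : MemLp Y 2 P) (h : ∫ ω, ⟪X ω, Y ω⟫ ∂P = 0) :
    ∫ ω, ‖X ω - Y ω‖ ^ 2 ∂P = ∫ ω, ‖X ω‖ ^ 2 ∂P + ∫ ω, ‖Y ω‖ ^ 2 ∂P := by
  have := integral_sq_norm_add_of_integral_inner_eq_zero hX hY.neg <| by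
    simp only [Pi.neg_apply, inner_neg_right, integral_neg, h, neg_zero]
  simpa [← sub_eq_add_neg] using this

theorem integral_sq_norm_sum_of_uncorrelated {ι : Type*} [Fintype ι] {Y : ι → Ω → E}
    (hY : ∀ i, MemLp (Y i) 2 P) (h : ∀ i j, i ≠ j → ∫ ω, ⟪Y i ω, Y j ω⟫ ∂P = 0) :
    ∫ ω, ‖∑ i, Y i ω‖ ^ 2 ∂P = ∑ i, ∫ ω, ‖Y i ω‖ ^ 2 ∂P := by
  have hint (i j : ι) : Integrable (fun ω => ⟪Y i ω, Y j ω⟫) P :=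
    (hY i).integrable_inner (hY j)
  simp_rw [← real_inner_self_eq_norm_sq, sum_inner, inner_sum]
  rw [integral_finsetSum _ fun i _ => integrable_finsetSum _ fun j _ => hint i j]
  refine sum_congr rfl fun i _ => ?_
  rw [integral_finsetSum _ fun j _ => hint i j]
  exact sum_eq_single i (fun j _ hji => h i j hji.symm) (by simp)

theorem integral_le_mul_integral_add_of_le [IsProbabilityMeasure P] {f g : Ω → ℝ} {a b : ℝ}
    (hf : ∀ ω, 0 ≤ f ω) (hg : Integrable g P) (h : ∀ ω, f ω ≤ a * g ω + b) :
    ∫ ω, f ω ∂P ≤ a * ∫ ω, g ω ∂P + b := by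
  have hag := hg.const_mul a
  calc ∫ ω, f ω ∂P ≤ ∫ ω, (a * g ω + b) ∂P :=
        integral_mono_of_nonneg (.of_forall hf) (hag.add (integrable_const b)) (.of_forall h)
    _ = a * ∫ ω, g ω ∂P + b := by
        rw [integral_add hag (integrable_const b), integral_const_mul, integral_const]
        simp

variable [CompleteSpace E]

theorem integral_sq_norm_add_of_indepFun [IsFiniteMeasure P] [MeasurableSpace E] [BorelSpace E]
    {X Y : Ω → E} (hXY : IndepFun X Y P) (hX : MemLp X 2 P) (hY : MemLp Y 2 P)
    (hY0 : ∫ ω, Y ω ∂P = 0) :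
    ∫ ω, ‖X ω + Y ω‖ ^ 2 ∂P = ∫ ω, ‖X ω‖ ^ 2 ∂P + ∫ ω, ‖Y ω‖ ^ 2 ∂P :=
  integral_sq_norm_add_of_integral_inner_eq_zero hX hY <| by
    have := hXY.integral_bilin (hX.integrable one_le_two) (hY.integrable one_le_two) (innerSL ℝ)
    rwa [hY0, map_zero] at this

theorem integral_sq_norm_add_smul_sum_of_indepFun [IsFiniteMeasure P] [MeasurableSpace E]
    [BorelSpace E] [SecondCountableTopology E] {ι : Type*} [Fintype ι] {X : Ω → E}
    {n : ι → Ω → E} (c : ℝ) (hnX : IndepFun (fun ω i => n i ω) X P) (hX : MemLp X 2 P)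
    (hn : ∀ i, MemLp (n i) 2 P) (hn0 : ∀ i, ∫ ω, n i ω ∂P = 0) :
    ∫ ω, ‖X ω + c • ∑ i, n i ω‖ ^ 2 ∂P
      = ∫ ω, ‖X ω‖ ^ 2 ∂P + ∫ ω, ‖c • ∑ i, n i ω‖ ^ 2 ∂P := by
  refine integral_sq_norm_add_of_indepFun ?_ hX
    ((memLp_finsetSum _ fun i _ => hn i).const_smul c) ?_
  · exact hnX.symm.comp measurable_id (by fun_prop : Measurable fun v : ι → E => c • ∑ i, v i)
  · rw [integral_smul, integral_finsetSum _ fun i _ => (hn i).integrable one_le_two]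
    simp [hn0]

theorem integral_inner_eq_zero_of_condExp_ae_eq_zero (hm : m ≤ mΩ) [SigmaFinite (P.trim hm)]
    {X Y : Ω → E} (hX : AEStronglyMeasurable[m] X P)
    (hXY : Integrable (fun ω => ⟪X ω, Y ω⟫) P) (hY : Integrable Y P) (hY0 : P[Y|m] =ᵐ[P] 0) :
    ∫ ω, ⟪X ω, Y ω⟫ ∂P = 0 := by
  rw [← integral_condExp hm]
  refine (integral_congr_ae ?_).trans (integral_zero Ω ℝ)
  filter_upwards [condExp_bilin_of_aestronglyMeasurable_left (innerSL ℝ) hX hXY hY, hY0]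
    with ω hω hω0
  rw [Pi.zero_apply] at hω0
  exact hω.trans (by rw [hω0]; exact map_zero _)

theorem condExp_sub_ae_eq_zero (hm : m ≤ mΩ) [SigmaFinite (P.trim hm)] {G g : Ω → E}
    (hG : Integrable G P) (hGg : P[G|m] =ᵐ[P] g) :
    P[fun ω => G ω - g ω|m] =ᵐ[P] 0 := by
  change P[G - g|m] =ᵐ[P] 0
  have hg : Integrable g P := integrable_condExp.congr hGg
  have hgm : AEStronglyMeasurable[m] g P := ⟨_, stronglyMeasurable_condExp, hGg.symm⟩
  filter_upwards [condExp_sub hG hg m, hGg, condExp_of_aestronglyMeasurable' hm hgm hg]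
    with ω hsub hG' hg'
  simp [hsub, hG', hg']

theorem integral_sq_norm_sub_smul_sum_of_condExp [IsFiniteMeasure P] (hm : m ≤ mΩ)
    {ι : Type*} [Fintype ι] {p : Ω → E} {G g : ι → Ω → E} (c : ℝ)
    (hpm : AEStronglyMeasurable[m] p P) (hp : MemLp p 2 P) (hG : ∀ i, MemLp (G i) 2 P)
    (hGg : ∀ i, P[G i|m] =ᵐ[P] g i)
    (hcorr : ∀ i j, i ≠ j → ∫ ω, ⟪G i ω - g i ω, G j ω - g j ω⟫ ∂P = 0) :
    ∫ ω, ‖p ω - c • ∑ i, G i ω‖ ^ 2 ∂P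
      = ∫ ω, ‖p ω - c • ∑ i, g i ω‖ ^ 2 ∂P + c ^ 2 * ∑ i, ∫ ω, ‖G i ω - g i ω‖ ^ 2 ∂P := by
  have hg (i : ι) : MemLp (g i) 2 P := ((hG i).condExp one_le_two).ae_eq (hGg i)
  have hξ (i : ι) : MemLp (fun ω => G i ω - g i ω) 2 P := (hG i).sub (hg i)
  have hX : MemLp (fun ω => p ω - c • ∑ i, g i ω) 2 P :=
    hp.sub ((memLp_finsetSum _ fun i _ => hg i).const_smul c)
  have hXm : AEStronglyMeasurable[m] (fun ω => p ω - c • ∑ i, g i ω) P := by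
    refine hpm.sub (AEStronglyMeasurable.const_smul ⟨fun ω => ∑ i, P[G i|m] ω, ?_, ?_⟩ c)
    · exact Finset.stronglyMeasurable_fun_sum _ fun i _ => stronglyMeasurable_condExp
    · filter_upwards [ae_all_iff.2 hGg] with ω hω
      simp [hω]
  have hY : MemLp (fun ω => c • ∑ i, (G i ω - g i ω)) 2 P :=
    (memLp_finsetSum _ fun i _ => hξ i).const_smul c
  have hY0 : P[fun ω => c • ∑ i, (G i ω - g i ω)|m] =ᵐ[P] 0 := by
    have hξ0 (i : ι) : P[fun ω => G i ω - g i ω|m] =ᵐ[P] 0 :=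
      condExp_sub_ae_eq_zero hm ((hG i).integrable one_le_two) (hGg i)
    have hfun : (fun ω => c • ∑ i, (G i ω - g i ω)) = c • ∑ i, fun ω => G i ω - g i ω := by
      ext ω
      simp [Finset.sum_apply]
    rw [hfun]
    filter_upwards [condExp_smul (μ := P) c (∑ i, fun ω => G i ω - g i ω) m,
      condExp_finsetSum (fun i _ => (hξ i).integrable one_le_two) m, ae_all_iff.2 hξ0]
      with ω hsmul hsum hzero
    rw [hsmul, Pi.smul_apply, hsum, Finset.sum_apply]
    simp [hzero]
  have hsplit (ω : Ω) : p ω - c • ∑ i, G i ω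
      = (p ω - c • ∑ i, g i ω) - c • ∑ i, (G i ω - g i ω) := by
    rw [sum_sub_distrib, smul_sub]; abel
  simp_rw [hsplit]
  rw [integral_sq_norm_sub_of_integral_inner_eq_zero hX hY
    (integral_inner_eq_zero_of_condExp_ae_eq_zero hm hXm (hX.integrable_inner hY)
      (hY.integrable one_le_two) hY0)]
  simp_rw [norm_smul, mul_pow, Real.norm_eq_abs, sq_abs]
  rw [integral_const_mul, integral_sq_norm_sum_of_uncorrelated hξ hcorr]

end MeanSquare

theorem one_round_recursion_uplink_noise_general
    (d N Epo : ℕ) (hN : 0 < N)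
    (L mu H Gam : ℝ) (hL : 0 < L)
    (delta sigma : Fin N → ℝ)
    (F : Fin N → EuclideanSpace ℝ (Fin d) → ℝ)
    (gF : Fin N → EuclideanSpace ℝ (Fin d) → EuclideanSpace ℝ (Fin d))
    (wstar : EuclideanSpace ℝ (Fin d)) (Fkstar : Fin N → ℝ)
    (hsmooth : ∀ k v w, F k v ≤ F k w + ⟪v - w, gF k w⟫ + L / 2 * ‖v - w‖ ^ 2)
    (hconvex : ∀ k v w, F k v ≥ F k w + ⟪v - w, gF k w⟫ + mu / 2 * ‖v - w‖ ^ 2)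
    (hwstar : ∀ v, (N : ℝ)⁻¹ * ∑ k, F k wstar ≤ (N : ℝ)⁻¹ * ∑ k, F k v)
    (hFkstar : ∀ k v, Fkstar k ≤ F k v)
    (hGam : Gam = (N : ℝ)⁻¹ * ∑ k, F k wstar - (N : ℝ)⁻¹ * ∑ k, Fkstar k)
    (eta : ℕ → ℝ) (hetapos : ∀ τ, 0 ≤ eta τ)
    (hetaL : ∀ τ, eta τ ≤ 1 / (4 * L))
    (t : ℕ)
    (Ω : Type) [mΩ : MeasurableSpace Ω] (P : Measure Ω) [IsProbabilityMeasure P]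
    (pbar : Ω → EuclideanSpace ℝ (Fin d))
    (n : Fin N → Ω → EuclideanSpace ℝ (Fin d))
    (wloc gs : Fin N → Ω → EuclideanSpace ℝ (Fin d))
    (vbar : Ω → EuclideanSpace ℝ (Fin d))
    (hwloc : ∀ k, wloc k = pbar)
    (hvbar : vbar = fun ω => (N : ℝ)⁻¹ • ∑ k, (wloc k ω - eta t • gs k ω))
    (hmemp : MemLp pbar 2 P) (hmemn : ∀ k, MemLp (n k) 2 P)
    (hmemg : ∀ k, MemLp (gs k) 2 P)
    -- uplink noise statistics
    (hnmean : ∀ k, ∫ ω, n k ω ∂P = 0)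
    (hnv : IndepFun (fun ω (k : Fin N) => n k ω) vbar P)
    (hnvaragg : ∫ ω, ‖(N : ℝ)⁻¹ • ∑ k, n k ω‖ ^ 2 ∂P
      = (d : ℝ) * (∑ k, (sigma k) ^ 2) / (N : ℝ) ^ 2)
    -- stochastic gradients
    (mH : MeasurableSpace Ω) (hmH : mH ≤ mΩ)
    (hadapt : ∀ k, StronglyMeasurable[mH] (wloc k))
    (hunbiased : ∀ k, P[gs k|mH] =ᵐ[P] fun ω => gF k (wloc k ω))
    (hvar : ∀ k, ∫ ω, ‖gs k ω - gF k (wloc k ω)‖ ^ 2 ∂P ≤ (delta k) ^ 2)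
    (hgcross : ∀ j k, j ≠ k →
      ∫ ω, ⟪gs j ω - gF j (wloc j ω), gs k ω - gF k (wloc k ω)⟫ ∂P = 0) :
    ∫ ω, ‖vbar ω + (N : ℝ)⁻¹ • ∑ k, n k ω - wstar‖ ^ 2 ∂P
      ≤ (1 - eta t * mu) * ∫ ω, ‖pbar ω - wstar‖ ^ 2 ∂P
        + (d : ℝ) * (∑ k, (sigma k) ^ 2) / (N : ℝ) ^ 2
        + (eta t) ^ 2 * (∑ k, (delta k) ^ 2 / (N : ℝ) ^ 2 + 6 * L * Gam
            + 8 * ((Epo : ℝ) - 1) ^ 2 * H ^ 2) := by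
  have : Nonempty (Fin N) := ⟨⟨0, hN⟩⟩
  simp only [hwloc] at hadapt hunbiased hvar hgcross hvbar
  have hηL : eta t * L ≤ 1 := by
    linarith [(le_div_iff₀ (by positivity)).1 (hetaL t), hetapos t]
  have hvbar_eq (ω : Ω) : vbar ω - wstar = (pbar ω - wstar) - (eta t / N) • ∑ k, gs k ω := by
    simp only [hvbar]
    rw [inv_natCast_smul_sum_sub_smul hN.ne', sub_right_comm]
  have hcentred : MemLp (fun ω => pbar ω - wstar) 2 P := hmemp.sub (memLp_const wstar)
  have hV : MemLp (fun ω => vbar ω - wstar) 2 P := by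
    simp_rw [hvbar_eq]
    exact hcentred.sub ((memLp_finsetSum _ fun k _ => hmemg k).const_smul (eta t / N))
  have hnoise := integral_sq_norm_add_smul_sum_of_indepFun (X := fun ω => vbar ω - wstar)
    (n := n) (N : ℝ)⁻¹ (hnv.comp measurable_id (measurable_id.sub_const wstar)) hV hmemn hnmean
  have hsgd := integral_sq_norm_sub_smul_sum_of_condExp hmH (p := fun ω => pbar ω - wstar)
    (eta t / N) (((hadapt ⟨0, hN⟩).aestronglyMeasurable).sub aestronglyMeasurable_const)
    hcentred hmemg hunbiased hgcross
  have hstep := integral_le_mul_integral_add_of_le (fun ω => sq_nonneg _)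
    ((memLp_two_iff_integrable_sq_norm hcentred.1).1 hcentred) fun ω => by
      have := sq_norm_sub_smul_sum_grad_le hL hsmooth hconvex (by simpa using hwstar) hFkstar
        (hetapos t) hηL (pbar ω)
      rwa [Fintype.card_fin, ← hGam] at this
  have hΓ : 0 ≤ Gam := by
    rw [hGam, ← mul_sub, ← sum_sub_distrib]
    exact mul_nonneg (by positivity) (sum_nonneg fun k _ => sub_nonneg.2 (hFkstar k wstar))
  have hgradnoise : (eta t / N) ^ 2 * ∑ k, ∫ ω, ‖gs k ω - gF k (pbar ω)‖ ^ 2 ∂P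
      ≤ eta t ^ 2 * ∑ k, delta k ^ 2 / (N : ℝ) ^ 2 := by
    rw [← sum_div, div_pow, div_mul_eq_mul_div, mul_div_assoc]
    gcongr with k
    exact hvar k
  simp_rw [add_sub_right_comm _ _ wstar]
  rw [hnoise, hnvaragg]
  simp_rw [hvbar_eq]
  rw [hsgd]
  linarith [mul_nonneg (mul_nonneg hL.le (sq_nonneg (eta t))) hΓ,
    (by positivity : 0 ≤ eta t ^ 2 * (8 * ((Epo : ℝ) - 1) ^ 2 * H ^ 2))]

/-- **One-round recursion with uplink noise.**
There are `N` clients with `L`-smooth, `μ`-strongly convex local losses `F_k` (gradients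
`gF k`), global objective minimized at `w*`, non-IID gap `Γ`.  The clients start the
round from the common global model `p̄_t` (no downlink noise at step `t`) and perform
one local SGD step with learning rate `η_t` using conditionally unbiased stochastic
gradients with variance at most `δ_k²` and second moment at most `H²`, uncorrelated
across clients; the learning rates are nonnegative, non-increasing, with `η ≤ 2η_{·+E}`
and `η ≤ 1/(4L)`.  The uploads are corrupted by zero-mean uplink noises `n_{t+1}^k`
satisfying `E‖(1/N)∑ₖ n_{t+1}^k‖² = dσ²_{t+1}/N²` (`σ²_{t+1} = ∑ₖ σ²_{t+1,k}`),
mutually independent and independent of `v̄_{t+1}`, so that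
`p̄_{t+1} = v̄_{t+1} + (1/N)∑ₖ n_{t+1}^k`.  Then
`E‖p̄_{t+1} − w*‖² ≤ (1 − η_tμ) E‖p̄_t − w*‖² + dσ²_{t+1}/N²
  + η_t² (∑ₖ δ_k²/N² + 6LΓ + 8(E−1)²H²)`. -/
theorem one_round_recursion_uplink_noise
    (d N Epo : ℕ) (hN : 0 < N) (hEpo : 1 ≤ Epo)
    (L mu H Gam : ℝ) (hL : 0 < L) (hmu : 0 < mu) (hmuL : mu ≤ L)
    (delta sigma : Fin N → ℝ)
    (F : Fin N → EuclideanSpace ℝ (Fin d) → ℝ)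
    (gF : Fin N → EuclideanSpace ℝ (Fin d) → EuclideanSpace ℝ (Fin d))
    (wstar : EuclideanSpace ℝ (Fin d)) (Fkstar : Fin N → ℝ)
    (hsmooth : ∀ k v w, F k v ≤ F k w + ⟪v - w, gF k w⟫ + L / 2 * ‖v - w‖ ^ 2)
    (hconvex : ∀ k v w, F k v ≥ F k w + ⟪v - w, gF k w⟫ + mu / 2 * ‖v - w‖ ^ 2)
    (hwstar : ∀ v, (N : ℝ)⁻¹ * ∑ k, F k wstar ≤ (N : ℝ)⁻¹ * ∑ k, F k v)
    (hFkstar : ∀ k v, Fkstar k ≤ F k v)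
    (hGam : Gam = (N : ℝ)⁻¹ * ∑ k, F k wstar - (N : ℝ)⁻¹ * ∑ k, Fkstar k)
    (eta : ℕ → ℝ) (hetamono : Antitone eta) (hetapos : ∀ τ, 0 ≤ eta τ)
    (heta2 : ∀ τ, eta τ ≤ 2 * eta (τ + Epo)) (hetaL : ∀ τ, eta τ ≤ 1 / (4 * L))
    (t : ℕ)
    (Ω : Type) [mΩ : MeasurableSpace Ω] (P : Measure Ω) [IsProbabilityMeasure P]
    (pbar : Ω → EuclideanSpace ℝ (Fin d))
    (n : Fin N → Ω → EuclideanSpace ℝ (Fin d))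
    (wloc gs : Fin N → Ω → EuclideanSpace ℝ (Fin d))
    (vbar : Ω → EuclideanSpace ℝ (Fin d))
    (hwloc : ∀ k, wloc k = pbar)
    (hvbar : vbar = fun ω => (N : ℝ)⁻¹ • ∑ k, (wloc k ω - eta t • gs k ω))
    (hmemp : MemLp pbar 2 P) (hmemn : ∀ k, MemLp (n k) 2 P)
    (hmemg : ∀ k, MemLp (gs k) 2 P)
    -- uplink noise statistics
    (hnmean : ∀ k, ∫ ω, n k ω ∂P = 0)
    (hnindep : iIndepFun n P)
    (hnv : IndepFun (fun ω (k : Fin N) => n k ω) vbar P)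
    (hnvaragg : ∫ ω, ‖(N : ℝ)⁻¹ • ∑ k, n k ω‖ ^ 2 ∂P
      = (d : ℝ) * (∑ k, (sigma k) ^ 2) / (N : ℝ) ^ 2)
    -- stochastic gradients
    (mH : MeasurableSpace Ω) (hmH : mH ≤ mΩ)
    (hadapt : ∀ k, StronglyMeasurable[mH] (wloc k))
    (hunbiased : ∀ k, P[gs k|mH] =ᵐ[P] fun ω => gF k (wloc k ω))
    (hvar : ∀ k, ∫ ω, ‖gs k ω - gF k (wloc k ω)‖ ^ 2 ∂P ≤ (delta k) ^ 2)
    (hbddgrad : ∀ k, ∫ ω, ‖gs k ω‖ ^ 2 ∂P ≤ H ^ 2)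
    (hgcross : ∀ j k, j ≠ k →
      ∫ ω, ⟪gs j ω - gF j (wloc j ω), gs k ω - gF k (wloc k ω)⟫ ∂P = 0) :
    ∫ ω, ‖vbar ω + (N : ℝ)⁻¹ • ∑ k, n k ω - wstar‖ ^ 2 ∂P
      ≤ (1 - eta t * mu) * ∫ ω, ‖pbar ω - wstar‖ ^ 2 ∂P
        + (d : ℝ) * (∑ k, (sigma k) ^ 2) / (N : ℝ) ^ 2
        + (eta t) ^ 2 * (∑ k, (delta k) ^ 2 / (N : ℝ) ^ 2 + 6 * L * Gam
            + 8 * ((Epo : ℝ) - 1) ^ 2 * H ^ 2) :=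
  one_round_recursion_uplink_noise_general d N Epo hN L mu H Gam hL delta sigma F gF wstar Fkstar
    hsmooth hconvex hwstar hFkstar hGam eta hetapos hetaL t Ω (mΩ := mΩ) P pbar n wloc gs vbar hwloc
    hvbar hmemp hmemn hmemg hnmean hnv hnvaragg mH hmH hadapt hunbiased hvar hgcross
end
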